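/- Every regular P-space is zero-dimensional, hence completely regular and strongly zero-dimensional: if X is a regular topological space in which every countable intersection of open sets is open, then the clopen sets of X form a base of X, and for every pair Z₁, Z₂ of disjoint zero-sets of X there exists a clopen set U with Z₁ ⊆ U ⊆ X \ Z₂. -/

import Mathlib

/-!
A zero-set `f⁻¹{0}` is a closed Gδ, so in a P-space it is clopen; this already separates
disjoint zero-sets. For a clopen base, regularity yields opens `u = V₀ ⊇ V₁ ⊇ ⋯` around `x`
with `closure Vₙ₊₁ ⊆ Vₙ`; their intersection is open because `X` is a P-space, and closed
because it equals `⋂ closure Vₙ₊₁`. Indicators of clopen sets then show that co-zero sets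
form a base as well.
-/

open Set TopologicalSpace

/-- `X` is a P-space: every countable intersection of open sets is open. -/
def IsPSpace (X : Type*) [TopologicalSpace X] : Prop :=
  ∀ F : Set (Set X), F.Countable → (∀ U ∈ F, IsOpen U) → IsOpen (⋂₀ F)

section

variable {X : Type*} [TopologicalSpace X]

theorem isClosed_iInter_of_closure_succ_subset {V : ℕ → Set X}
    (hV : ∀ n, closure (V (n + 1)) ⊆ V n) : IsClosed (⋂ n, V n) := by
  have : ⋂ n, V n = ⋂ n, closure (V (n + 1)) :=
    Subset.antisymm (subset_iInter fun n => (iInter_subset V (n + 1)).trans subset_closure)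
      (iInter_mono hV)
  rw [this]
  exact isClosed_iInter fun n => isClosed_closure

theorem RegularSpace.exists_seq_isOpen_closure_succ_subset [RegularSpace X] {x : X}
    {u : Set X} (hu : IsOpen u) (hx : x ∈ u) :
    ∃ V : ℕ → Set X, V 0 = u ∧ (∀ n, IsOpen (V n) ∧ x ∈ V n) ∧
      ∀ n, closure (V (n + 1)) ⊆ V n := by
  have shrink (V : {V : Set X // IsOpen V ∧ x ∈ V}) :
      ∃ W : {W : Set X // IsOpen W ∧ x ∈ W}, closure W.1 ⊆ V.1 := by
    obtain ⟨W, ⟨hxW, hW⟩, hWV⟩ := (hasBasis_opens_closure x).mem_iff.1 (V.2.1.mem_nhds V.2.2)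
    exact ⟨⟨W, hW, hxW⟩, hWV⟩
  choose next hnext using shrink
  refine ⟨fun n => (next^[n] ⟨u, hu, hx⟩).1, rfl, fun n => (next^[n] _).2, fun n => ?_⟩
  simpa only [Function.iterate_succ_apply'] using hnext _

end

namespace IsPSpace

variable {X : Type*} [TopologicalSpace X]

theorem isOpen_of_isGδ (hP : IsPSpace X) {s : Set X} (hs : IsGδ s) : IsOpen s := by
  obtain ⟨T, hTo, hTc, rfl⟩ := hs
  exact hP T hTc hTo

theorem isClopen_preimage {Y : Type*} [TopologicalSpace Y] [PerfectlyNormalSpace Y]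
    (hP : IsPSpace X) {f : X → Y} (hf : Continuous f) {s : Set Y} (hs : IsClosed s) :
    IsClopen (f ⁻¹' s) :=
  ⟨hs.preimage hf, hP.isOpen_of_isGδ (hs.isGδ.preimage hf)⟩

theorem exists_isClopen_mem_subset [RegularSpace X] (hP : IsPSpace X) {x : X} {u : Set X}
    (hu : IsOpen u) (hx : x ∈ u) : ∃ w, IsClopen w ∧ x ∈ w ∧ w ⊆ u := by
  obtain ⟨V, rfl, hVx, hV⟩ := RegularSpace.exists_seq_isOpen_closure_succ_subset hu hx
  exact ⟨⋂ n, V n,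
    ⟨isClosed_iInter_of_closure_succ_subset hV,
      hP.isOpen_of_isGδ (.iInter_of_isOpen fun n => (hVx n).1)⟩,
    mem_iInter.2 fun n => (hVx n).2, iInter_subset V 0⟩

theorem isTopologicalBasis_isClopen [RegularSpace X] (hP : IsPSpace X) :
    IsTopologicalBasis {U : Set X | IsClopen U} :=
  isTopologicalBasis_of_isOpen_of_nhds (fun _ hU => hU.isOpen)
    fun _ _ hx hu => hP.exists_isClopen_mem_subset hu hx

end IsPSpace

theorem IsClopen.exists_continuous_eq_compl_preimage_zero {X : Type*} [TopologicalSpace X]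
    {U : Set X} (hU : IsClopen U) : ∃ f : X → ℝ, Continuous f ∧ U = (f ⁻¹' {0})ᶜ :=
  ⟨U.indicator 1, hU.continuous_indicator continuous_const, by ext; simp [indicator]⟩

theorem regularSpace_of_exists_isOpen_closure_subset {X : Type*} [TopologicalSpace X]
    (h : ∀ (x : X) (V : Set X), IsOpen V → x ∈ V → ∃ U, IsOpen U ∧ x ∈ U ∧ closure U ⊆ V) :
    RegularSpace X := by
  refine .of_exists_mem_nhds_isClosed_subset fun x s hs => ?_
  obtain ⟨U, hU, hxU, hUs⟩ := h x (interior s) isOpen_interior (mem_interior_iff_mem_nhds.2 hs)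
  exact ⟨closure U, Filter.mem_of_superset (hU.mem_nhds hxU) subset_closure, isClosed_closure,
    hUs.trans interior_subset⟩

theorem stmt15 {X : Type*} [TopologicalSpace X]
    -- `X` is regular (no T₁ assumed)
    (hreg : ∀ (x : X) (V : Set X), IsOpen V → x ∈ V →
      ∃ U : Set X, IsOpen U ∧ x ∈ U ∧ closure U ⊆ V)
    (hP : IsPSpace X) :
    -- `X` is zero-dimensional: the clopen sets form a base
    IsTopologicalBasis {U : Set X | IsClopen U} ∧
    -- hence completely regular: the co-zero sets form a base
    IsTopologicalBasis {U : Set X | ∃ f : X → ℝ, Continuous f ∧ U = (f ⁻¹' {0})ᶜ} ∧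
    -- and strongly zero-dimensional: disjoint zero-sets are separated by clopen sets
    ∀ f g : X → ℝ, Continuous f → Continuous g → Disjoint (f ⁻¹' {0}) (g ⁻¹' {0}) →
      ∃ U : Set X, IsClopen U ∧ f ⁻¹' {0} ⊆ U ∧ U ⊆ (g ⁻¹' {0})ᶜ := by
  have := regularSpace_of_exists_isOpen_closure_subset hreg
  have hclopen := hP.isTopologicalBasis_isClopen
  refine ⟨hclopen, ?_, fun f g hf _ hfg => ?_⟩
  · refine hclopen.of_isOpen_of_subset ?_ fun U hU => hU.exists_continuous_eq_compl_preimage_zero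
    rintro _ ⟨f, hf, rfl⟩
    exact (isClosed_singleton.preimage hf).isOpen_compl
  · exact ⟨f ⁻¹' {0}, hP.isClopen_preimage hf isClosed_singleton, subset_rfl,
      subset_compl_iff_disjoint_right.2 hfg⟩
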